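/- Let G be a finite cyclic group and M a finite G-module. Then the orders of Ĥ^0(G,M) and Ĥ^{-1}(G,M) are equal (the Herbrand quotient of a finite module is trivial). -/

import Mathlib

section TateCore

variable (G : Type*) [Group G] [Fintype G] (M : Type*) [AddCommGroup M] [DistribMulAction G M]

/-- The subgroup of `G`-invariant elements of `M`. -/
def invariants : AddSubgroup M where
  carrier := {x | ∀ g : G, g • x = x}
  zero_mem' := fun g => smul_zero g
  add_mem' := fun {a b} ha hb g => by rw [smul_add, ha g, hb g]
  neg_mem' := fun {a} ha g => by rw [smul_neg, ha g]

/-- The norm map `x ↦ ∑ g • x`. -/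
def tateNorm : M →+ M where
  toFun x := ∑ g : G, g • x
  map_zero' := by simp
  map_add' a b := by simp [smul_add, Finset.sum_add_distrib]

/-- The augmentation submodule `I_G · M`, generated by elements `g • x - x`. -/
def augSubgroup : AddSubgroup M :=
  AddSubgroup.closure {y | ∃ (g : G) (x : M), y = g • x - x}

/-- Tate cohomology `Ĥ⁰(G,M) = M^G / N_G M`. -/
abbrev TateH0 :=
  invariants G M ⧸ ((tateNorm G M).range.addSubgroupOf (invariants G M))

/-- Tate cohomology `Ĥ⁻¹(G,M) = M[N_G] / I_G M`. -/
abbrev TateHneg1 :=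
  (tateNorm G M).ker ⧸ ((augSubgroup G M).addSubgroupOf (tateNorm G M).ker)

variable {G M} {N : Type*} [AddCommGroup N] [DistribMulAction G N]

/-- The map on invariants induced by a `G`-equivariant homomorphism. -/
def invariantsMap (φ : M →+ N) (hφ : ∀ (g : G) (x : M), φ (g • x) = g • φ x) :
    invariants G M →+ invariants G N :=
  AddMonoidHom.codRestrict (φ.comp (invariants G M).subtype) _ (by
    rintro ⟨x, hx⟩ g
    simpa [← hφ g x] using congrArg φ (hx g))

/-- The map on `Ĥ⁰` induced by a `G`-equivariant homomorphism. -/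
def TateH0Map (φ : M →+ N) (hφ : ∀ (g : G) (x : M), φ (g • x) = g • φ x) :
    TateH0 G M →+ TateH0 G N :=
  QuotientAddGroup.map _ _ (invariantsMap φ hφ) (by
    rintro ⟨x, hx⟩ hmem
    rw [AddSubgroup.mem_addSubgroupOf] at hmem
    rw [AddSubgroup.mem_comap, AddSubgroup.mem_addSubgroupOf]
    obtain ⟨y, hy⟩ := hmem
    refine ⟨φ y, ?_⟩
    show ∑ g : G, g • φ y = _
    simp only [← hφ]
    rw [← map_sum]
    exact congrArg φ hy)

/-- The map on kernels of norms induced by a `G`-equivariant homomorphism. -/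
def normKerMap (φ : M →+ N) (hφ : ∀ (g : G) (x : M), φ (g • x) = g • φ x) :
    (tateNorm G M).ker →+ (tateNorm G N).ker :=
  AddMonoidHom.codRestrict (φ.comp (tateNorm G M).ker.subtype) _ (by
    rintro ⟨x, hx⟩
    rw [AddMonoidHom.mem_ker] at hx ⊢
    show ∑ g : G, g • φ x = 0
    simp only [← hφ]
    rw [← map_sum]
    change φ (tateNorm G M x) = 0
    rw [hx, map_zero])

/-- The map on `Ĥ⁻¹` induced by a `G`-equivariant homomorphism. -/
def TateHneg1Map (φ : M →+ N) (hφ : ∀ (g : G) (x : M), φ (g • x) = g • φ x) :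
    TateHneg1 G M →+ TateHneg1 G N :=
  QuotientAddGroup.map _ _ (normKerMap φ hφ) (by
    rintro ⟨x, hx⟩ hmem
    rw [AddSubgroup.mem_addSubgroupOf] at hmem
    rw [AddSubgroup.mem_comap, AddSubgroup.mem_addSubgroupOf]
    have : φ x ∈ (augSubgroup G M).map φ := AddSubgroup.mem_map_of_mem φ hmem
    have hle : (augSubgroup G M).map φ ≤ augSubgroup G N := by
      rw [augSubgroup, AddMonoidHom.map_closure]
      apply (AddSubgroup.closure_le _).mpr
      rintro y ⟨z, ⟨g, x', rfl⟩, rfl⟩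
      exact AddSubgroup.subset_closure ⟨g, φ x', by simp [hφ]⟩
    exact hle this)

end TateCore

/-!
If `g` generates `G`, then `M^G = ker (g - 1)` and `I_G M = im (g - 1)`, while `N_G` has image
in `ker (g - 1)` and kills `im (g - 1)`. For any two such endomorphisms `D`, `N` of a finite group,
`|ker D| · |im D| = |M| = |ker N| · |im N|` forces `[ker D : im N] = [ker N : im D]`.
-/

theorem AddSubgroup.card_mul_relIndex {M : Type*} [AddGroup M] {H K : AddSubgroup M}
    (hHK : H ≤ K) : Nat.card H * H.relIndex K = Nat.card K := by
  rw [← relIndex_bot_left, ← relIndex_bot_left, relIndex_mul_relIndex _ _ _ bot_le hHK]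

theorem AddMonoidHom.card_ker_mul_card_range {M N : Type*} [AddGroup M] [AddGroup N]
    (f : M →+ N) : Nat.card f.ker * Nat.card f.range = Nat.card M := by
  rw [← AddSubgroup.index_ker]
  exact f.ker.card_mul_index

theorem AddMonoidHom.relIndex_range_ker_comm {M : Type*} [AddGroup M] [Finite M] {f g : M →+ M}
    (hgf : g.range ≤ f.ker) (hfg : f.range ≤ g.ker) :
    g.range.relIndex f.ker = f.range.relIndex g.ker := by
  have hf := f.card_ker_mul_card_range
  have hg := g.card_ker_mul_card_range
  rw [← AddSubgroup.card_mul_relIndex hgf] at hf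
  rw [← AddSubgroup.card_mul_relIndex hfg] at hg
  have hpos : 0 < Nat.card g.range * Nat.card f.range := Nat.mul_pos Nat.card_pos Nat.card_pos
  refine Nat.eq_of_mul_eq_mul_left hpos ?_
  linarith

section Cyclic

variable {G M : Type*} [Group G] [AddCommGroup M] [DistribMulAction G M]

variable (M) in
def smulSubSelf (g : G) : M →+ M :=
  DistribSMul.toAddMonoidHom M g - AddMonoidHom.id M

@[simp]
theorem smulSubSelf_apply (g : G) (x : M) : smulSubSelf M g x = g • x - x := rfl

theorem smul_sub_self_mem_range_smulSubSelf {g h : G} (hh : h ∈ Subgroup.zpowers g) (x : M) :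
    h • x - x ∈ (smulSubSelf M g).range := by
  rw [Subgroup.zpowers_eq_closure] at hh
  induction hh using Subgroup.closure_induction generalizing x with
  | mem h hh =>
    rw [Set.mem_singleton_iff.mp hh]
    exact ⟨x, rfl⟩
  | one => simp
  | mul h k _ _ hh hk =>
    rw [mul_smul, ← sub_add_sub_cancel _ (k • x)]
    exact add_mem (hh _) (hk x)
  | inv h _ hh =>
    rw [← neg_sub, ← smul_inv_smul h x, inv_smul_smul]
    exact neg_mem (hh _)

theorem invariants_eq_ker_smulSubSelf {g : G} (hg : ∀ h : G, h ∈ Subgroup.zpowers g) :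
    invariants G M = (smulSubSelf M g).ker := by
  ext x
  simp only [AddMonoidHom.mem_ker, smulSubSelf_apply, sub_eq_zero]
  refine ⟨fun hx => hx g, fun hx h => ?_⟩
  obtain ⟨j, rfl⟩ := hg h
  exact MulAction.mem_fixedBy_zpow hx j

theorem augSubgroup_eq_range_smulSubSelf {g : G} (hg : ∀ h : G, h ∈ Subgroup.zpowers g) :
    augSubgroup G M = (smulSubSelf M g).range := by
  refine le_antisymm ((AddSubgroup.closure_le _).mpr ?_) ?_
  · rintro _ ⟨h, x, rfl⟩
    exact smul_sub_self_mem_range_smulSubSelf (hg h) x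
  · rintro _ ⟨x, rfl⟩
    exact AddSubgroup.subset_closure ⟨g, x, rfl⟩

variable [Fintype G]

theorem range_tateNorm_le_invariants : (tateNorm G M).range ≤ invariants G M := by
  rintro _ ⟨x, rfl⟩ k
  change k • ∑ h : G, h • x = ∑ h : G, h • x
  simp only [Finset.smul_sum, ← mul_smul]
  exact Equiv.sum_comp (Equiv.mulLeft k) (· • x)

theorem range_smulSubSelf_le_ker_tateNorm (g : G) :
    (smulSubSelf M g).range ≤ (tateNorm G M).ker := by
  rintro _ ⟨x, rfl⟩
  rw [AddMonoidHom.mem_ker, smulSubSelf_apply, map_sub, sub_eq_zero]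
  change ∑ h : G, h • g • x = ∑ h : G, h • x
  simp only [← mul_smul]
  exact Equiv.sum_comp (Equiv.mulRight g) (· • x)

end Cyclic

/-- The Herbrand quotient of a finite module over a finite cyclic group is
trivial: `|Ĥ⁰(G, M)| = |Ĥ⁻¹(G, M)|`. -/
theorem card_tateH0_eq_card_tateHneg1
    (G M : Type*) [Group G] [Fintype G] [AddCommGroup M] [DistribMulAction G M]
    [Finite M] (hG : IsCyclic G) :
    Nat.card (TateH0 G M) = Nat.card (TateHneg1 G M) := by
  obtain ⟨g, hg⟩ := hG
  have hinv := invariants_eq_ker_smulSubSelf (M := M) hg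
  change (tateNorm G M).range.relIndex (invariants G M) =
    (augSubgroup G M).relIndex (tateNorm G M).ker
  rw [hinv, augSubgroup_eq_range_smulSubSelf hg]
  exact AddMonoidHom.relIndex_range_ker_comm (hinv ▸ range_tateNorm_le_invariants)
    (range_smulSubSelf_le_ker_tateNorm g)
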